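/- arXiv:1803.11279 — 2 statements merged into one kernel-verified Lean document; each statement's English description precedes it below -/
import Mathlib

section
/- Let z: (-∞, t₀] → ℝ be a bounded solution of v'' + v' - 6v = f(v) with f continuous, f(0) = 0, |f(v)| ≤ C v² near 0, and z(t) → 0, z'(t) → 0 as t → -∞. Then there exists T ≤ t₀ and a constant M such that |z(t)| ≤ M e^{2t} for all t ≤ T. -/
/-!
With `w = z' - 2z` the equation becomes the triangular system `z' = 2z + w`, `w' = f(z) - 3w`.
Since `w → 0` at `-∞`, variation of constants bounds `w t` by a third of the supremum of
`|f(z τ)|` over `τ ≤ t`, while `e^{-2t} z` has derivative `e^{-2t} w`. Near `-∞` we have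
`|f(z)| ≤ |z| / 4`; comparing `|z t|` with the running maximum of `|z|` gives `|w| ≤ |z| / 2`,
and Grönwall's inequality applied to `e^{-2t} z` gives the preliminary decay `|z t| ≲ e^{3t/2}`.
The quadratic bound then improves this to `|f(z)| ≲ e^{3t}`, hence `|w| ≲ e^{3t}`, so the
derivative of `e^{-2t} z` is integrable at `-∞` and `e^{-2t} z` stays bounded.
-/

open Real Filter Set Topology

theorem abs_sub_le_sub_of_abs_deriv_le {F G F' G' : ℝ → ℝ} {s t : ℝ} (hst : s ≤ t)
    (hF : ∀ x ∈ Icc s t, HasDerivAt F (F' x) x) (hG : ∀ x ∈ Icc s t, HasDerivAt G (G' x) x)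
    (bound : ∀ x ∈ Icc s t, |F' x| ≤ G' x) : |F t - F s| ≤ G t - G s :=
  image_norm_le_of_norm_deriv_right_le_deriv_boundary' (f := fun x => F x - F s)
    (B := fun x => G x - G s)
    (fun x hx => ((hF x hx).continuousAt.sub continuousAt_const).continuousWithinAt)
    (fun x hx => ((hF x (Ico_subset_Icc_self hx)).sub_const (F s)).hasDerivWithinAt)
    (by simp)
    (fun x hx => ((hG x hx).continuousAt.sub continuousAt_const).continuousWithinAt)
    (fun x hx => ((hG x (Ico_subset_Icc_self hx)).sub_const (G s)).hasDerivWithinAt)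
    (fun x hx => bound x (Ico_subset_Icc_self hx)) (right_mem_Icc.2 hst)

theorem abs_le_abs_mul_exp_of_abs_deriv_le {u u' : ℝ → ℝ} {K s t : ℝ} (hst : s ≤ t)
    (hu : ∀ x ∈ Icc s t, HasDerivAt u (u' x) x) (bound : ∀ x ∈ Icc s t, |u' x| ≤ K * |u x|) :
    |u s| ≤ |u t| * exp (K * (t - s)) := by
  have hmem : ∀ y ∈ Icc 0 (t - s), t - y ∈ Icc s t := fun y hy =>
    ⟨by linarith [hy.2], by linarith [hy.1]⟩
  have hv : ∀ y ∈ Icc 0 (t - s), HasDerivAt (fun y => u (t - y)) (-u' (t - y)) y :=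
    fun y hy => (hu _ (hmem y hy)).comp_const_sub t y
  have := norm_le_gronwallBound_of_norm_deriv_right_le (δ := |u t|) (K := K) (ε := 0)
    (fun y hy => (hv y hy).continuousAt.continuousWithinAt)
    (fun y hy => (hv y (Ico_subset_Icc_self hy)).hasDerivWithinAt) (by simp)
    (fun y hy => by simpa using bound _ (hmem y (Ico_subset_Icc_self hy)))
    (t - s) (right_mem_Icc.2 (sub_nonneg.2 hst))
  simpa [gronwallBound_ε0] using this

theorem hasDerivAt_exp_mul_mul {u ψ : ℝ → ℝ} {μ x : ℝ} (hu : HasDerivAt u (ψ x - μ * u x) x) :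
    HasDerivAt (fun y => exp (μ * y) * u y) (exp (μ * x) * ψ x) x :=
  (((hasDerivAt_id x).const_mul μ).exp.mul hu).congr_deriv (by simp only [id]; ring)

theorem abs_exp_mul_sub_le {u ψ : ℝ → ℝ} {μ a c s t : ℝ} (hμa : μ + a ≠ 0) (hst : s ≤ t)
    (hu : ∀ x ∈ Icc s t, HasDerivAt u (ψ x - μ * u x) x)
    (hψ : ∀ x ∈ Icc s t, |ψ x| ≤ c * exp (a * x)) :
    |exp (μ * t) * u t - exp (μ * s) * u s| ≤
      c / (μ + a) * (exp ((μ + a) * t) - exp ((μ + a) * s)) := by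
  have hG : ∀ x, HasDerivAt (fun y => c / (μ + a) * exp ((μ + a) * y))
      (exp (μ * x) * (c * exp (a * x))) x := fun x =>
    ((((hasDerivAt_id x).const_mul (μ + a)).exp).const_mul (c / (μ + a))).congr_deriv (by
      rw [id, add_mul μ a x, exp_add]
      field_simp)
  rw [mul_sub]
  refine abs_sub_le_sub_of_abs_deriv_le hst (fun x hx => hasDerivAt_exp_mul_mul (hu x hx))
    (fun x _ => hG x) fun x hx => ?_
  rw [abs_mul, abs_of_pos (exp_pos _)]
  exact mul_le_mul_of_nonneg_left (hψ x hx) (exp_pos _).le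

theorem abs_le_of_hasDerivAt_sub_mul_of_tendsto_atBot {w φ : ℝ → ℝ} {k a c t : ℝ} (hk : 0 < k)
    (hka : 0 < k + a) (hw : ∀ x ≤ t, HasDerivAt w (φ x - k * w x) x)
    (hw0 : Tendsto w atBot (𝓝 0)) (hφ : ∀ x ≤ t, |φ x| ≤ c * exp (a * x)) :
    |w t| ≤ c / (k + a) * exp (a * t) := by
  have hexp : ∀ r > 0, Tendsto (fun s => exp (r * s)) atBot (𝓝 0) := fun r hr =>
    tendsto_exp_atBot.comp (tendsto_id.const_mul_atBot hr)
  have hstep : ∀ s ≤ t, exp (k * t) * |w t| ≤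
      exp (k * s) * |w s| + c / (k + a) * (exp ((k + a) * t) - exp ((k + a) * s)) := by
    intro s hs
    have h := (abs_sub_abs_le_abs_sub _ _).trans
      (abs_exp_mul_sub_le hka.ne' hs (fun x hx => hw x hx.2) fun x hx => hφ x hx.2)
    rw [abs_mul, abs_mul, abs_of_pos (exp_pos _), abs_of_pos (exp_pos _)] at h
    linarith
  have hlim : Tendsto (fun s => exp (k * s) * |w s| +
      c / (k + a) * (exp ((k + a) * t) - exp ((k + a) * s))) atBot
      (𝓝 (c / (k + a) * exp ((k + a) * t))) := by
    simpa using ((hexp k hk).mul hw0.abs).add (((hexp _ hka).const_sub _).const_mul _)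
  have hmul : exp (k * t) * |w t| ≤ exp (k * t) * (c / (k + a) * exp (a * t)) := by
    rw [mul_left_comm, ← exp_add, ← add_mul]
    exact ge_of_tendsto hlim (eventually_atBot.2 ⟨t, hstep⟩)
  exact le_of_mul_le_mul_left hmul (exp_pos _)

theorem abs_le_abs_add_div_of_hasDerivAt_mul_add {z w : ℝ → ℝ} {r c s t : ℝ} (hr : 0 < r)
    (hst : s ≤ t) (hz : ∀ x ∈ Icc s t, HasDerivAt z (r * z x + w x) x)
    (hw : ∀ x ∈ Icc s t, |w x| ≤ c) : |z s| ≤ |z t| + c / r := by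
  have h := (abs_sub_abs_le_abs_sub _ _).trans ((abs_sub_comm _ _).trans_le
    (abs_exp_mul_sub_le (u := z) (ψ := w) (μ := -r) (a := 0) (by linarith) hst
      (fun x hx => (hz x hx).congr_deriv (by ring)) fun x hx => by simpa using hw x hx))
  rw [abs_mul, abs_mul, abs_of_pos (exp_pos _), abs_of_pos (exp_pos _)] at h
  simp only [add_zero, div_neg, neg_mul] at h
  have hc : 0 ≤ c / r := div_nonneg ((abs_nonneg _).trans (hw s ⟨le_rfl, hst⟩)) hr.le
  have hts : exp (-(r * t)) ≤ exp (-(r * s)) := exp_le_exp.2 (by nlinarith)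
  refine le_of_mul_le_mul_left ?_ (exp_pos (-(r * s)))
  nlinarith [abs_nonneg (z t), exp_pos (-(r * t))]

theorem abs_le_mul_exp_of_hasDerivAt_mul_add {z w : ℝ → ℝ} {r a c s t : ℝ} (hra : r < a)
    (hst : s ≤ t) (hz : ∀ x ∈ Icc s t, HasDerivAt z (r * z x + w x) x)
    (hw : ∀ x ∈ Icc s t, |w x| ≤ c * exp (a * x)) :
    |z s| ≤ (exp (-r * t) * |z t| + c / (a - r) * exp ((a - r) * t)) * exp (r * s) := by
  have h := (abs_sub_abs_le_abs_sub _ _).trans ((abs_sub_comm _ _).trans_le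
    (abs_exp_mul_sub_le (u := z) (ψ := w) (μ := -r) (a := a) (by linarith) hst
      (fun x hx => (hz x hx).congr_deriv (by ring)) hw))
  rw [abs_mul, abs_mul, abs_of_pos (exp_pos _), abs_of_pos (exp_pos _), neg_add_eq_sub] at h
  have hc : 0 ≤ c / (a - r) := div_nonneg (nonneg_of_mul_nonneg_left
    ((abs_nonneg _).trans (hw s ⟨le_rfl, hst⟩)) (exp_pos _)) (by linarith)
  have hzs : |z s| = exp (r * s) * (exp (-r * s) * |z s|) := by
    rw [← mul_assoc, ← exp_add]; simp
  rw [hzs, mul_comm _ (exp (r * s))]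
  gcongr
  nlinarith [exp_pos ((a - r) * s)]

theorem abs_le_abs_mul_exp_of_hasDerivAt_mul_add {z w : ℝ → ℝ} {r δ s t : ℝ} (hst : s ≤ t)
    (hz : ∀ x ∈ Icc s t, HasDerivAt z (r * z x + w x) x)
    (hw : ∀ x ∈ Icc s t, |w x| ≤ δ * |z x|) :
    |z s| ≤ |z t| * exp ((r - δ) * (s - t)) := by
  have hu := abs_le_abs_mul_exp_of_abs_deriv_le (K := δ) hst
    (fun x hx => hasDerivAt_exp_mul_mul (u := z) (ψ := w) (μ := -r)
      ((hz x hx).congr_deriv (by ring))) fun x hx => by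
      rw [abs_mul, abs_mul, abs_of_pos (exp_pos _), mul_left_comm]
      exact mul_le_mul_of_nonneg_left (hw x hx) (exp_pos _).le
  rw [abs_mul, abs_mul, abs_of_pos (exp_pos _), abs_of_pos (exp_pos _)] at hu
  calc |z s| = exp (r * s) * (exp (-r * s) * |z s|) := by rw [← mul_assoc, ← exp_add]; simp
    _ ≤ exp (r * s) * (exp (-r * t) * |z t| * exp (δ * (t - s))) := by gcongr
    _ = |z t| * (exp (r * s) * exp (-r * t) * exp (δ * (t - s))) := by ring
    _ = |z t| * exp ((r - δ) * (s - t)) := by rw [← exp_add, ← exp_add]; ring_nf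

theorem ContDiffOn.hasDerivAt_deriv_of_lt {z : ℝ → ℝ} {t₀ x : ℝ}
    (hz : ContDiffOn ℝ 2 z (Iic t₀)) (hx : x < t₀) :
    HasDerivAt (deriv z) (deriv (deriv z) x) x :=
  ((((hz.mono Iio_subset_Iic_self).deriv_of_isOpen isOpen_Iio (by norm_num)).contDiffAt
    (Iio_mem_nhds hx)).differentiableAt one_ne_zero).hasDerivAt

section TriangularSystem

variable {z w g : ℝ → ℝ} {T : ℝ}

theorem abs_le_half_abs_of_abs_forcing_le {t : ℝ}
    (hz : ∀ x ≤ T, HasDerivAt z (2 * z x + w x) x)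
    (hw : ∀ x ≤ T, HasDerivAt w (g x - 3 * w x) x) (hw0 : Tendsto w atBot (𝓝 0))
    (hzb : BddAbove ((fun x => |z x|) '' Iic T)) (hg : ∀ x ≤ T, |g x| ≤ |z x| / 4)
    (ht : t ≤ T) : |w t| ≤ |z t| / 2 := by
  set m := sSup ((fun x => |z x|) '' Iic t)
  have hzm : ∀ x ≤ t, |z x| ≤ m := fun x hx =>
    le_csSup (hzb.mono (image_mono (Iic_subset_Iic.2 ht))) ⟨x, hx, rfl⟩
  have hwm : ∀ x ≤ t, |w x| ≤ m / 12 := fun x hx => by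
    have := abs_le_of_hasDerivAt_sub_mul_of_tendsto_atBot (k := 3) (a := 0) (c := m / 4)
      (by norm_num) (by norm_num) (fun y hy => hw y (hy.trans (hx.trans ht))) hw0
      fun y hy => by
        simpa using (hg y (hy.trans (hx.trans ht))).trans (by linarith [hzm y (hy.trans hx)])
    linarith [show m / 4 / (3 + 0) * exp (0 * x) = m / 12 by simp; ring]
  have hzt : ∀ s ≤ t, |z s| ≤ |z t| + m / 24 := fun s hs => by
    have := abs_le_abs_add_div_of_hasDerivAt_mul_add two_pos hs (fun x hx => hz x (hx.2.trans ht))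
      fun x hx => hwm x hx.2
    linarith
  have hm : m ≤ |z t| + m / 24 :=
    csSup_le (image_nonempty.2 nonempty_Iic) (by rintro _ ⟨s, hs, rfl⟩; exact hzt s hs)
  linarith [hwm t le_rfl, abs_nonneg (z t)]

theorem exists_abs_le_mul_exp_two_mul {C : ℝ} (hC : 0 ≤ C)
    (hz : ∀ x ≤ T, HasDerivAt z (2 * z x + w x) x)
    (hw : ∀ x ≤ T, HasDerivAt w (g x - 3 * w x) x) (hw0 : Tendsto w atBot (𝓝 0))
    (hzb : BddAbove ((fun x => |z x|) '' Iic T)) (hgz : ∀ x ≤ T, |g x| ≤ |z x| / 4)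
    (hgC : ∀ x ≤ T, |g x| ≤ C * z x ^ 2) :
    ∃ M, ∀ s ≤ T, |z s| ≤ M * exp (2 * s) := by
  have hwz : ∀ x ≤ T, |w x| ≤ 1 / 2 * |z x| := fun x hx => by
    linarith [abs_le_half_abs_of_abs_forcing_le hz hw hw0 hzb hgz hx]
  set A := |z T| * exp (-(3 / 2) * T)
  have hz32 : ∀ s ≤ T, |z s| ≤ A * exp (3 / 2 * s) := fun s hs =>
    calc |z s| ≤ |z T| * exp ((2 - 1 / 2) * (s - T)) :=
          abs_le_abs_mul_exp_of_hasDerivAt_mul_add hs (fun x hx => hz x hx.2)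
            fun x hx => hwz x hx.2
      _ = A * exp (3 / 2 * s) := by rw [mul_assoc, ← exp_add]; ring_nf
  have hg3 : ∀ x ≤ T, |g x| ≤ C * A ^ 2 * exp (3 * x) := fun x hx =>
    calc |g x| ≤ C * |z x| ^ 2 := by simpa only [sq_abs] using hgC x hx
      _ ≤ C * (A * exp (3 / 2 * x)) ^ 2 := by gcongr; exact hz32 x hx
      _ = C * A ^ 2 * exp (3 * x) := by rw [mul_pow, ← exp_nat_mul]; ring_nf
  have hw3 : ∀ x ≤ T, |w x| ≤ C * A ^ 2 / (3 + 3) * exp (3 * x) := fun x hx =>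
    abs_le_of_hasDerivAt_sub_mul_of_tendsto_atBot (by norm_num) (by norm_num)
      (fun y hy => hw y (hy.trans hx)) hw0 fun y hy => hg3 y (hy.trans hx)
  exact ⟨_, fun s hs => abs_le_mul_exp_of_hasDerivAt_mul_add (by norm_num : (2 : ℝ) < 3) hs
    (fun x hx => hz x hx.2) fun x hx => hw3 x hx.2⟩

end TriangularSystem

theorem unstable_manifold_decay_general
    (t₀ : ℝ) (z : ℝ → ℝ) (f : ℝ → ℝ) (C : ℝ)
    (hfquad : ∃ ε > 0, ∀ v : ℝ, |v| ≤ ε → |f v| ≤ C * v ^ 2)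
    (hz : ContDiffOn ℝ 2 z (Set.Iic t₀))
    (hbdd : ∃ K : ℝ, ∀ t ≤ t₀, |z t| ≤ K)
    (hode : ∀ t ≤ t₀, deriv (deriv z) t + deriv z t - 6 * z t = f (z t))
    (hz0 : Filter.Tendsto z Filter.atBot (nhds 0))
    (hz'0 : Filter.Tendsto (deriv z) Filter.atBot (nhds 0)) :
    ∃ T ≤ t₀, ∃ M : ℝ, ∀ t ≤ T, |z t| ≤ M * Real.exp (2 * t) := by
  obtain ⟨ε, hε, hfε⟩ := hfquad
  have hC : 0 ≤ C := nonneg_of_mul_nonneg_left ((abs_nonneg _).trans (hfε ε (abs_of_pos hε).le))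
    (by positivity)
  have hz0' : Tendsto (fun t => |z t|) atBot (𝓝 0) := by simpa using hz0.abs
  obtain ⟨T, hT⟩ : ∃ T, ∀ t ≤ T, t < t₀ ∧ |z t| ≤ ε ∧ 4 * C * |z t| ≤ 1 :=
    eventually_atBot.1 <| (eventually_lt_atBot t₀).and <| (hz0'.eventually_le_const hε).and <|
      (hz0'.const_mul (4 * C)).eventually_le_const (by simp)
  set w := fun x => deriv z x - 2 * z x
  have hdz : ∀ x ≤ T, HasDerivAt z (deriv z x) x := fun x hx =>
    ((hz.contDiffAt (Iic_mem_nhds (hT x hx).1)).differentiableAt two_ne_zero).hasDerivAt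
  have hzw : ∀ x ≤ T, HasDerivAt z (2 * z x + w x) x := fun x hx =>
    (hdz x hx).congr_deriv (by ring)
  have hw : ∀ x ≤ T, HasDerivAt w (f (z x) - 3 * w x) x := fun x hx =>
    ((hz.hasDerivAt_deriv_of_lt (hT x hx).1).sub ((hdz x hx).const_mul 2)).congr_deriv
      (by linarith [hode x (hT x hx).1.le])
  have hw0 : Tendsto w atBot (𝓝 0) := by simpa using hz'0.sub (hz0.const_mul 2)
  have hzb : BddAbove ((fun x => |z x|) '' Iic T) := by
    obtain ⟨K, hK⟩ := hbdd
    exact ⟨K, by rintro _ ⟨x, hx, rfl⟩; exact hK x (hT x hx).1.le⟩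
  have hfz : ∀ x ≤ T, |f (z x)| ≤ |z x| / 4 := fun x hx => by
    nlinarith [hfε _ (hT x hx).2.1, sq_abs (z x), abs_nonneg (z x), (hT x hx).2.2]
  obtain ⟨M, hM⟩ :=
    exists_abs_le_mul_exp_two_mul hC hzw hw hw0 hzb hfz fun x hx => hfε _ (hT x hx).2.1
  exact ⟨T, (hT T le_rfl).1.le, M, hM⟩

/-- A bounded solution of `v'' + v' - 6v = f(v)` on `(-∞, t₀]` with `z, z' → 0` as `t → -∞`
decays like `e^{2t}`: there are `T ≤ t₀` and `M` with `|z t| ≤ M e^{2t}` for `t ≤ T`. -/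
theorem unstable_manifold_decay
    (t₀ : ℝ) (z : ℝ → ℝ) (f : ℝ → ℝ) (C : ℝ)
    (hf : Continuous f) (hf0 : f 0 = 0)
    (hfquad : ∃ ε > 0, ∀ v : ℝ, |v| ≤ ε → |f v| ≤ C * v ^ 2)
    (hz : ContDiffOn ℝ 2 z (Set.Iic t₀))
    (hbdd : ∃ K : ℝ, ∀ t ≤ t₀, |z t| ≤ K)
    (hode : ∀ t ≤ t₀, deriv (deriv z) t + deriv z t - 6 * z t = f (z t))
    (hz0 : Filter.Tendsto z Filter.atBot (nhds 0))
    (hz'0 : Filter.Tendsto (deriv z) Filter.atBot (nhds 0)) :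
    ∃ T ≤ t₀, ∃ M : ℝ, ∀ t ≤ T, |z t| ≤ M * Real.exp (2 * t) :=
  unstable_manifold_decay_general t₀ z f C hfquad hz hbdd hode hz0 hz'0
end

section
/- Suppose z: [0,δ) → ℝ satisfies |z(ρ)| ≤ M ρ² for all ρ ∈ [0,δ) and z is smooth on (0,δ). If additionally z solves z'' + (2/ρ)z' = 3z(z-1)(z-2)/(ρ²(1-ρ²)) on (0,δ), then z extends to a C¹ function on [0,δ) with z(0) = 0 and z'(0) = 0. -/
open Real Set
set_option maxHeartbeats 1000000

/-- A function on `(0,b]` whose derivative is at least `c/ρ²` with `c > 0` cannot be bounded. -/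
lemma no_blowup (b c B : ℝ) (hb : 0 < b) (hc : 0 < c) (ψ ψ' : ℝ → ℝ)
    (hcont : ContinuousOn ψ (Set.Ioc 0 b))
    (hder : ∀ ρ ∈ Set.Ioo 0 b, HasDerivAt ψ (ψ' ρ) ρ)
    (hge : ∀ ρ ∈ Set.Ioo 0 b, c / ρ ^ 2 ≤ ψ' ρ)
    (hB : ∀ ρ ∈ Set.Ioc 0 b, |ψ ρ| ≤ B) : False := by
  set φ : ℝ → ℝ := fun ρ => ψ ρ + c / ρ with hφ
  have hφder : ∀ ρ ∈ Set.Ioo 0 b, HasDerivAt φ (ψ' ρ - c / ρ ^ 2) ρ := by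
    intro ρ hρ
    have h1 : HasDerivAt (fun ρ : ℝ => c / ρ) (c * (-(ρ ^ 2)⁻¹)) ρ := by
      simpa [div_eq_mul_inv] using (hasDerivAt_inv (ne_of_gt hρ.1)).const_mul c
    have : HasDerivAt (fun x => ψ x + c / x) (ψ' ρ + c * -(ρ ^ 2)⁻¹) ρ := (hder ρ hρ).add h1
    convert this using 1
    ring
  have hmono : MonotoneOn φ (Set.Ioc 0 b) := by
    apply monotoneOn_of_deriv_nonneg (convex_Ioc 0 b)
    · exact hcont.add (continuousOn_const.div continuousOn_id fun ρ hρ => ne_of_gt hρ.1)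
    · rw [interior_Ioc]
      exact fun ρ hρ => ((hφder ρ hρ).differentiableAt).differentiableWithinAt
    · rw [interior_Ioc]
      intro ρ hρ
      rw [(hφder ρ hρ).deriv]
      linarith [hge ρ hρ]
  have hB0 : 0 ≤ B := le_trans (abs_nonneg _) (hB b ⟨hb, le_rfl⟩)
  set K : ℝ := 2 * B + c / b with hK
  have hKpos : 0 < K + 1 := by positivity
  set a : ℝ := min b (c / (K + 1)) with ha
  have ha0 : 0 < a := lt_min hb (by positivity)
  have hab : a ∈ Set.Ioc 0 b := ⟨ha0, min_le_left _ _⟩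
  have hle : φ a ≤ φ b := hmono hab ⟨hb, le_rfl⟩ hab.2
  have h1 : c / a ≤ K := by
    have h2 := hB a hab
    have h3 := hB b ⟨hb, le_rfl⟩
    simp only [hφ] at hle
    have : c / a ≤ ψ b - ψ a + c / b := by linarith
    linarith [abs_le.1 h2, abs_le.1 h3]
  have h4 : K + 1 ≤ c / a := by
    rw [le_div_iff₀ ha0]
    calc (K + 1) * a ≤ (K + 1) * (c / (K + 1)) :=
          mul_le_mul_of_nonneg_left (min_le_right _ _) (le_of_lt hKpos)
      _ = c := by field_simp
  linarith

/-- If `z` on `[0,δ)` satisfies `|z ρ| ≤ M ρ²`, is smooth on `(0,δ)`, and solves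
`z'' + (2/ρ) z' = 3z(z-1)(z-2)/(ρ²(1-ρ²))` on `(0,δ)`, then `z` is `C¹` on `[0,δ)`
with `z(0) = 0` and `z'(0) = 0`. -/
theorem regularity_at_origin
    (δ M : ℝ) (hδ : δ ∈ Set.Ioo (0:ℝ) 1) (hM : 0 < M)
    (z : ℝ → ℝ)
    (hbound : ∀ ρ ∈ Set.Ico (0:ℝ) δ, |z ρ| ≤ M * ρ ^ 2)
    (hsmooth : ContDiffOn ℝ (⊤ : ℕ∞) z (Set.Ioo 0 δ))
    (hode : ∀ ρ ∈ Set.Ioo (0:ℝ) δ,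
      deriv (deriv z) ρ + (2 / ρ) * deriv z ρ
        = 3 * z ρ * (z ρ - 1) * (z ρ - 2) / (ρ ^ 2 * (1 - ρ ^ 2))) :
    ContDiffOn ℝ 1 z (Set.Ico 0 δ) ∧ z 0 = 0 ∧ derivWithin z (Set.Ico 0 δ) 0 = 0 := by
  obtain ⟨hδ0, hδ1⟩ := hδ
  have hopen : IsOpen (Set.Ioo (0:ℝ) δ) := isOpen_Ioo
  -- z 0 = 0
  have hz00 : z 0 = 0 := by
    have := hbound 0 ⟨le_rfl, hδ0⟩
    simp only [ne_eq, OfNat.ofNat_ne_zero, not_false_eq_true, zero_pow, mul_zero] at this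
    exact abs_eq_zero.1 (le_antisymm this (abs_nonneg _))
  -- the constant
  set C : ℝ := 3 * M * (M * δ ^ 2 + 1) * (M * δ ^ 2 + 2) / (1 - δ ^ 2) with hC
  have hδsq : δ ^ 2 < 1 := by nlinarith
  have hCpos : 0 < C := by
    apply div_pos (by positivity) (by linarith)
  -- differentiability facts on (0,δ)
  have hz'sm : ContDiffOn ℝ (⊤ : ℕ∞) (deriv z) (Set.Ioo 0 δ) :=
    hsmooth.deriv_of_isOpen hopen (by simp)
  have hdzAt : ∀ ρ ∈ Set.Ioo (0:ℝ) δ, DifferentiableAt ℝ z ρ := fun ρ hρ =>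
    ((hsmooth.differentiableOn (by simp)) ρ hρ).differentiableAt (hopen.mem_nhds hρ)
  have hdz'At : ∀ ρ ∈ Set.Ioo (0:ℝ) δ, DifferentiableAt ℝ (deriv z) ρ := fun ρ hρ =>
    ((hz'sm.differentiableOn (by simp)) ρ hρ).differentiableAt (hopen.mem_nhds hρ)
  -- derivative of w = ρ² z'
  have hw : ∀ ρ ∈ Set.Ioo (0:ℝ) δ, HasDerivAt (fun ρ => ρ ^ 2 * deriv z ρ)
      (3 * z ρ * (z ρ - 1) * (z ρ - 2) / (1 - ρ ^ 2)) ρ := by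
    intro ρ hρ
    have hρ0 : ρ ≠ 0 := ne_of_gt hρ.1
    have hρsq : (1:ℝ) - ρ ^ 2 ≠ 0 := by nlinarith [hρ.1, hρ.2]
    have h1 : HasDerivAt (fun ρ : ℝ => ρ ^ 2) (2 * ρ) ρ := by
      simpa using hasDerivAt_pow 2 ρ
    have h2 : HasDerivAt (deriv z) (deriv (deriv z) ρ) ρ := (hdz'At ρ hρ).hasDerivAt
    have h3 : HasDerivAt (fun ρ => ρ ^ 2 * deriv z ρ) (2 * ρ * deriv z ρ + ρ ^ 2 * deriv (deriv z) ρ) ρ := h1.mul h2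
    convert h3 using 1
    have e := hode ρ hρ
    have : deriv (deriv z) ρ = 3 * z ρ * (z ρ - 1) * (z ρ - 2) / (ρ ^ 2 * (1 - ρ ^ 2))
        - 2 / ρ * deriv z ρ := by linarith
    rw [this]
    field_simp
    ring
  -- pointwise bound on the RHS
  have hfb : ∀ ρ ∈ Set.Ioo (0:ℝ) δ,
      |3 * z ρ * (z ρ - 1) * (z ρ - 2) / (1 - ρ ^ 2)| ≤ C * ρ ^ 2 := by
    intro ρ hρ
    have hz := hbound ρ ⟨le_of_lt hρ.1, hρ.2⟩
    have hρδ : ρ ^ 2 ≤ δ ^ 2 := by nlinarith [hρ.1, hρ.2]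
    have hz1 : |z ρ - 1| ≤ M * δ ^ 2 + 1 := by
      have := abs_le.1 hz
      rw [abs_le]
      constructor <;> nlinarith
    have hz2 : |z ρ - 2| ≤ M * δ ^ 2 + 2 := by
      have := abs_le.1 hz
      rw [abs_le]
      constructor <;> nlinarith
    have hden : (0:ℝ) < 1 - ρ ^ 2 := by nlinarith [hρ.1, hρ.2]
    have hden2 : (1:ℝ) - δ ^ 2 ≤ 1 - ρ ^ 2 := by nlinarith
    have hnum : |3 * z ρ * (z ρ - 1) * (z ρ - 2)| ≤ 3 * (M * ρ ^ 2) * (M * δ ^ 2 + 1) * (M * δ ^ 2 + 2) := by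
      rw [show 3 * z ρ * (z ρ - 1) * (z ρ - 2) = 3 * (z ρ) * ((z ρ - 1) * (z ρ - 2)) by ring]
      rw [abs_mul, abs_mul, abs_mul]
      have h3 : |(3:ℝ)| = 3 := by norm_num
      rw [h3]
      have hp : |z ρ - 1| * |z ρ - 2| ≤ (M * δ ^ 2 + 1) * (M * δ ^ 2 + 2) :=
        mul_le_mul hz1 hz2 (abs_nonneg _) (by positivity)
      have hq : |z ρ| * (|z ρ - 1| * |z ρ - 2|) ≤ (M * ρ ^ 2) * ((M * δ ^ 2 + 1) * (M * δ ^ 2 + 2)) :=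
        mul_le_mul hz hp (by positivity) (by positivity)
      nlinarith [hq]
    rw [abs_div, abs_of_pos hden]
    rw [div_le_iff₀ hden]
    have hCρ : C * ρ ^ 2 * (1 - ρ ^ 2) ≥ 3 * (M * ρ ^ 2) * (M * δ ^ 2 + 1) * (M * δ ^ 2 + 2) := by
      rw [hC]
      rw [div_mul_eq_mul_div, div_mul_eq_mul_div, ge_iff_le, le_div_iff₀ (by linarith : (0:ℝ) < 1 - δ ^ 2)]
      have hρ2 : (0:ℝ) ≤ ρ ^ 2 := sq_nonneg ρ
      nlinarith [mul_nonneg (mul_nonneg (by positivity : (0:ℝ) ≤ 3 * M * (M * δ^2+1) * (M*δ^2+2)) hρ2) (sub_nonneg.2 hden2)]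
    linarith [hnum]
  -- w ± (C/3)ρ³ monotone/antitone
  have hwpm : ∀ (σ : ℝ), σ = 1 ∨ σ = -1 →
      MonotoneOn (fun ρ => σ * (ρ ^ 2 * deriv z ρ) + (C / 3) * ρ ^ 3) (Set.Ioo 0 δ) := by
    intro σ hσ
    have hder : ∀ ρ ∈ Set.Ioo (0:ℝ) δ,
        HasDerivAt (fun ρ => σ * (ρ ^ 2 * deriv z ρ) + (C / 3) * ρ ^ 3)
          (σ * (3 * z ρ * (z ρ - 1) * (z ρ - 2) / (1 - ρ ^ 2)) + C * ρ ^ 2) ρ := by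
      intro ρ hρ
      have h1 : HasDerivAt (fun ρ => σ * (ρ ^ 2 * deriv z ρ) + (C / 3) * ρ ^ 3)
          (σ * (3 * z ρ * (z ρ - 1) * (z ρ - 2) / (1 - ρ ^ 2)) + C / 3 * (((3:ℕ):ℝ) * ρ ^ (3 - 1))) ρ :=
        ((hw ρ hρ).const_mul σ).add ((hasDerivAt_pow 3 ρ).const_mul (C / 3))
      convert h1 using 1
      push_cast
      ring
    apply monotoneOn_of_deriv_nonneg (convex_Ioo 0 δ)
    · exact fun ρ hρ => ((hder ρ hρ).differentiableAt).continuousAt.continuousWithinAt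
    · rw [interior_Ioo]
      exact fun ρ hρ => ((hder ρ hρ).differentiableAt).differentiableWithinAt
    · rw [interior_Ioo]
      intro ρ hρ
      rw [(hder ρ hρ).deriv]
      have := abs_le.1 (hfb ρ hρ)
      rcases hσ with h | h <;> rw [h] <;> nlinarith [this.1, this.2]
  have hmono := hwpm (-1) (Or.inr rfl)
  have hanti := hwpm 1 (Or.inl rfl)
  -- key bound |ρ² z'(ρ)| ≤ (C/3) ρ³
  have hkey : ∀ b ∈ Set.Ioo (0:ℝ) δ, |b ^ 2 * deriv z b| ≤ (C / 3) * b ^ 3 := by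
    intro b hb
    have hbIoc : Set.Ioc (0:ℝ) b ⊆ Set.Ioo 0 δ := fun x hx => ⟨hx.1, lt_of_le_of_lt hx.2 hb.2⟩
    have hbIoo : Set.Ioo (0:ℝ) b ⊆ Set.Ioo 0 δ := fun x hx => ⟨hx.1, lt_trans hx.2 hb.2⟩
    rw [abs_le]
    constructor
    · -- lower bound: -(C/3) b³ ≤ w b ; else use ψ = -z
      by_contra hlt
      push_neg at hlt
      set c : ℝ := -(b ^ 2 * deriv z b) - (C / 3) * b ^ 3 with hc
      have hcpos : 0 < c := by simp only [hc]; linarith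
      refine no_blowup b c (M * δ ^ 2) hb.1 hcpos (fun ρ => -(z ρ)) (fun ρ => -(deriv z ρ))
        ?_ ?_ ?_ ?_
      · exact (((hsmooth.continuousOn).mono hbIoc).neg)
      · intro ρ hρ
        exact ((hdzAt ρ (hbIoo hρ)).hasDerivAt).neg
      · intro ρ hρ
        have hρδ := hbIoo hρ
        -- from mono of w + (C/3)ρ³ : w ρ + (C/3)ρ³ ≤ w b + (C/3)b³ = -c
        have := hwpm 1 (Or.inl rfl) hρδ hb (le_of_lt hρ.2)
        simp only [one_mul] at this
        have hwρ : ρ ^ 2 * deriv z ρ ≤ -c := by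
          have h3 : (0:ℝ) ≤ (C / 3) * ρ ^ 3 := mul_nonneg (by linarith) (pow_nonneg hρ.1.le 3)
          simp only [hc]
          linarith
        rw [div_le_iff₀ (pow_pos hρ.1 2)]
        show c ≤ -deriv z ρ * ρ ^ 2
        nlinarith
      · intro ρ hρ
        rw [abs_neg]
        have hρδ := hbIoc hρ
        have h1 := hbound ρ ⟨le_of_lt hρ.1, hρδ.2⟩
        have : ρ ^ 2 ≤ δ ^ 2 := by nlinarith [hρ.1, hρδ.2]
        nlinarith
    · -- upper bound: w b ≤ (C/3) b³ ; else use ψ = z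
      by_contra hlt
      push_neg at hlt
      set c : ℝ := b ^ 2 * deriv z b - (C / 3) * b ^ 3 with hc
      have hcpos : 0 < c := by simp only [hc]; linarith
      refine no_blowup b c (M * δ ^ 2) hb.1 hcpos z (deriv z) ?_ ?_ ?_ ?_
      · exact (hsmooth.continuousOn).mono hbIoc
      · exact fun ρ hρ => (hdzAt ρ (hbIoo hρ)).hasDerivAt
      · intro ρ hρ
        have hρδ := hbIoo hρ
        have := hwpm (-1) (Or.inr rfl) hρδ hb (le_of_lt hρ.2)
        simp only [neg_one_mul] at this
        have hwρ : c ≤ ρ ^ 2 * deriv z ρ := by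
          have h3 : (0:ℝ) ≤ (C / 3) * ρ ^ 3 := mul_nonneg (by linarith) (pow_nonneg hρ.1.le 3)
          simp only [hc]
          linarith
        rw [div_le_iff₀ (pow_pos hρ.1 2)]
        show c ≤ deriv z ρ * ρ ^ 2
        nlinarith
      · intro ρ hρ
        have hρδ := hbIoc hρ
        have h1 := hbound ρ ⟨le_of_lt hρ.1, hρδ.2⟩
        have : ρ ^ 2 ≤ δ ^ 2 := by nlinarith [hρ.1, hρδ.2]
        nlinarith
  -- pointwise bound on the first derivative
  have hz' : ∀ b ∈ Set.Ioo (0:ℝ) δ, |deriv z b| ≤ (C / 3) * b := by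
    intro b hb
    have h := hkey b hb
    have hb2 : (0:ℝ) < b ^ 2 := pow_pos hb.1 2
    rw [abs_mul, abs_of_pos hb2] at h
    have h2 : b ^ 2 * |deriv z b| ≤ b ^ 2 * ((C / 3) * b) := by nlinarith
    exact le_of_mul_le_mul_left h2 hb2
  have husq : UniqueDiffOn ℝ (Set.Ico (0:ℝ) δ) := uniqueDiffOn_Ico 0 δ
  have h0mem : (0:ℝ) ∈ Set.Ico (0:ℝ) δ := ⟨le_rfl, hδ0⟩
  -- derivative 0 at the origin
  have hd0 : HasDerivWithinAt z 0 (Set.Ico 0 δ) 0 := by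
    rw [hasDerivWithinAt_iff_tendsto_slope]
    apply squeeze_zero_norm' (a := fun ρ => M * ρ)
    · filter_upwards [self_mem_nhdsWithin] with ρ hρ
      obtain ⟨hρs, hρ0⟩ := hρ
      have hρpos : 0 < ρ := lt_of_le_of_ne hρs.1 (Ne.symm hρ0)
      have hb := hbound ρ hρs
      rw [slope_def_field]
      rw [hz00, sub_zero, sub_zero, norm_eq_abs, abs_div, abs_of_pos hρpos,
        div_le_iff₀ hρpos]
      nlinarith
    · have : Filter.Tendsto (fun ρ : ℝ => M * ρ) (nhds 0) (nhds 0) := by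
        have hcM : Continuous (fun ρ : ℝ => M * ρ) := by fun_prop
        simpa using hcM.tendsto (0:ℝ)
      exact this.mono_left nhdsWithin_le_nhds
  have hdOn : DifferentiableOn ℝ z (Set.Ico 0 δ) := by
    intro x hx
    rcases eq_or_lt_of_le hx.1 with h | h
    · rw [← h]; exact hd0.differentiableWithinAt
    · exact (hdzAt x ⟨h, hx.2⟩).differentiableWithinAt
  have hdW0 : derivWithin z (Set.Ico 0 δ) 0 = 0 := hd0.derivWithin (husq 0 h0mem)
  have hdWeq : ∀ x ∈ Set.Ioo (0:ℝ) δ, derivWithin z (Set.Ico 0 δ) x = deriv z x := fun x hx =>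
    (hdzAt x hx).derivWithin (husq x ⟨hx.1.le, hx.2⟩)
  -- continuity of the derivative up to the origin
  have hcontD : ContinuousOn (derivWithin z (Set.Ico 0 δ)) (Set.Ico 0 δ) := by
    intro x hx
    rcases eq_or_lt_of_le hx.1 with h | h
    · rw [← h]
      have hT : Filter.Tendsto (derivWithin z (Set.Ico 0 δ)) (nhdsWithin 0 (Set.Ico 0 δ))
          (nhds 0) := by
        apply squeeze_zero_norm' (a := fun ρ => (C / 3) * ρ)
        · filter_upwards [self_mem_nhdsWithin] with ρ hρ
          rcases eq_or_lt_of_le hρ.1 with h0 | h0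
          · rw [← h0, hdW0]; simp
          · rw [hdWeq ρ ⟨h0, hρ.2⟩, norm_eq_abs]
            exact hz' ρ ⟨h0, hρ.2⟩
        · have : Filter.Tendsto (fun ρ : ℝ => (C / 3) * ρ) (nhds 0) (nhds 0) := by
            have hcC : Continuous (fun ρ : ℝ => (C / 3) * ρ) := by fun_prop
            simpa using hcC.tendsto (0:ℝ)
          exact this.mono_left nhdsWithin_le_nhds
      unfold ContinuousWithinAt
      rwa [hdW0]
    · have hxI : x ∈ Set.Ioo (0:ℝ) δ := ⟨h, hx.2⟩
      have hni : Set.Ioo (0:ℝ) δ ∈ nhds x := hopen.mem_nhds hxI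
      have hcA : ContinuousAt (deriv z) x := (hz'sm.continuousOn x hxI).continuousAt hni
      apply ContinuousWithinAt.congr_of_eventuallyEq hcA.continuousWithinAt
      · filter_upwards [mem_nhdsWithin_of_mem_nhds hni] with ρ hρ using hdWeq ρ hρ
      · exact hdWeq x hxI
  refine ⟨?_, hz00, hdW0⟩
  rw [show (1 : WithTop ℕ∞) = 0 + 1 from rfl, contDiffOn_succ_iff_derivWithin husq]
  refine ⟨hdOn, by simp, contDiffOn_zero.2 hcontD⟩
end
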